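/- Fix a permutation (c_1, ..., c_k) of the colors. Define D[v, i] = min over u of (T[u, i-1] + dist(u, v)) if c_i ∈ col(v) and ∞ otherwise, and T[v, i] = min over u of (D[u, i] + dist(u, v)), with T[v, 0] = dist(s, v). Then T[v, i] equals the minimum weight of a walk from s to v that collects the colors c_1, ..., c_i in this order (i.e., contains vertices u_1, ..., u_i appearing in order along the walk with c_j ∈ col(u_j)). -/

import Mathlib

open scoped ENNReal

/-- Weight of a walk (ℝ≥0∞-valued): sum of weights of consecutive pairs. -/
noncomputable def walkWeightE {V : Type*} (w : V → V → ℝ≥0∞) : List V → ℝ≥0∞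
  | [] => 0
  | [_] => 0
  | a :: b :: rest => w a b + walkWeightE w (b :: rest)

/-- A walk `p` collects the colors `cs` in order: some subsequence of `p` carries the colors
of `cs` position by position. -/
def CollectsInOrder {V C : Type*} (col : V → Finset C) (p : List V) (cs : List C) : Prop :=
  ∃ q : List V, q.Sublist p ∧ List.Forall₂ (fun c u => c ∈ col u) cs q

private lemma walkWeightE_ge {V : Type*} (dist : V → V → ℝ≥0∞) (hrefl : ∀ v, dist v v = 0)
    (htri : ∀ u v x, dist u x ≤ dist u v + dist v x) :
    ∀ (p : List V) (a b : V), p.head? = some a → p.getLast? = some b →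
      dist a b ≤ walkWeightE dist p := by
  intro p
  induction p with
  | nil => intro a b h; simp at h
  | cons x t ih =>
    intro a b ha hb
    simp at ha; subst ha
    cases t with
    | nil => simp [List.getLast?] at hb; subst hb; simp [walkWeightE, hrefl]
    | cons y t' =>
      have hb' : (y :: t').getLast? = some b := by
        rw [List.getLast?_cons_cons] at hb; exact hb
      calc dist x b ≤ dist x y + dist y b := htri x y b
        _ ≤ dist x y + walkWeightE dist (y :: t') := by
            exact add_le_add_right (ih y b (by simp) hb') _
        _ = walkWeightE dist (x :: y :: t') := rfl

private lemma walkWeightE_append_cons {V : Type*} (w : V → V → ℝ≥0∞) :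
    ∀ (p1 : List V) (x : V) (p2 : List V),
      walkWeightE w (p1 ++ x :: p2) = walkWeightE w (p1 ++ [x]) + walkWeightE w (x :: p2) := by
  intro p1
  induction p1 with
  | nil => intro x p2; simp [walkWeightE]
  | cons a t ih =>
    intro x p2
    cases t with
    | nil => cases p2 <;> simp [walkWeightE, add_assoc]
    | cons b t' =>
      show w a b + walkWeightE w (b :: (t' ++ x :: p2)) = _
      rw [show b :: (t' ++ x :: p2) = (b :: t') ++ x :: p2 from rfl, ih, ← add_assoc]
      rfl

private lemma walkWeightE_concat {V : Type*} (w : V → V → ℝ≥0∞) :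
    ∀ (p : List V) (b x : V), p.getLast? = some b →
      walkWeightE w (p ++ [x]) = walkWeightE w p + w b x := by
  intro p
  induction p with
  | nil => intro b x h; simp at h
  | cons a t ih =>
    intro b x h
    cases t with
    | nil => simp [List.getLast?] at h; subst h; simp [walkWeightE]
    | cons c t' =>
      rw [List.getLast?_cons_cons] at h
      show w a c + walkWeightE w (c :: (t' ++ [x])) = _
      rw [show c :: (t' ++ [x]) = (c :: t') ++ [x] from rfl, ih b x h, ← add_assoc]
      rfl

private lemma sublist_concat_split {α : Type*} {q : List α} {u : α} {p : List α}
    (h : (q ++ [u]).Sublist p) : ∃ p1 p2, p = p1 ++ u :: p2 ∧ q.Sublist p1 := by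
  rw [List.append_sublist_iff] at h
  obtain ⟨r1, r2, rfl, hq, hu⟩ := h
  have hmem : u ∈ r2 := hu.subset (by simp)
  obtain ⟨a, b, rfl⟩ := List.append_of_mem hmem
  exact ⟨r1 ++ a, b, by simp, hq.trans (by simp)⟩

private lemma forall2_concat_split {α β : Type*} {R : α → β → Prop} :
    ∀ {l : List α} {c : α} {q : List β}, List.Forall₂ R (l ++ [c]) q →
      ∃ q' u, q = q' ++ [u] ∧ List.Forall₂ R l q' ∧ R c u := by
  intro l
  induction l with
  | nil =>
    intro c q h
    simp only [List.nil_append] at h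
    cases h with
    | cons hcu htail =>
      cases htail
      exact ⟨[], _, rfl, List.Forall₂.nil, hcu⟩
  | cons a t ih =>
    intro c q h
    cases h with
    | cons hab htail =>
      obtain ⟨q', u, rfl, hf, hu⟩ := ih htail
      exact ⟨_ :: q', u, rfl, List.Forall₂.cons hab hf, hu⟩

private lemma head?_append_cons {α : Type*} (p1 : List α) (u : α) (p2 : List α) :
    (p1 ++ u :: p2).head? = (p1 ++ [u]).head? := by
  cases p1 <;> simp

private lemma getLast?_append_cons {α : Type*} (p1 : List α) (u : α) (p2 : List α) :
    (p1 ++ u :: p2).getLast? = (u :: p2).getLast? := by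
  rw [List.getLast?_append]
  cases h : (u :: p2).getLast? with
  | none => exact absurd h (by simp)
  | some x => rfl

/-- correctness of the order-respecting dynamic program. Given a fixed
permutation `cs` of colors and tables `D`, `T` satisfying
`T[v,0] = dist(s,v)`, `D[v,i] = min_u (T[u,i-1] + dist(u,v))` if `c_i ∈ col v` (else `∞`),
and `T[v,i] = min_u (D[u,i] + dist(u,v))`, the entry `T[v,i]` equals the minimum weight of a
walk from `s` to `v` collecting `c_1, …, c_i` in this order. -/
theorem stmt17 {V C : Type*} [DecidableEq C]
    (dist : V → V → ℝ≥0∞) (hrefl : ∀ v, dist v v = 0)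
    (hsymm : ∀ u v, dist u v = dist v u)
    (htri : ∀ u v x, dist u x ≤ dist u v + dist v x)
    (col : V → Finset C) (s : V)
    (cs : List C) (hnodup : cs.Nodup)
    (D T : V → ℕ → ℝ≥0∞)
    (hT0 : ∀ v, T v 0 = dist s v)
    (hD : ∀ (v : V) (i : ℕ) (hi : i < cs.length),
        D v (i + 1) = if cs.get ⟨i, hi⟩ ∈ col v then ⨅ u : V, T u i + dist u v else ⊤)
    (hT : ∀ (v : V) (i : ℕ), i < cs.length →
        T v (i + 1) = ⨅ u : V, D u (i + 1) + dist u v) :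
    ∀ (v : V) (i : ℕ), i ≤ cs.length →
      T v i = sInf {x | ∃ p : List V, p.head? = some s ∧ p.getLast? = some v ∧
        CollectsInOrder col p (cs.take i) ∧ walkWeightE dist p = x} := by

  intro v i
  induction i generalizing v with
  | zero =>
    intro _
    refine le_antisymm (le_sInf ?_) (sInf_le ?_)
    · rintro x ⟨p, hph, hpl, _, rfl⟩
      rw [hT0]
      exact walkWeightE_ge dist hrefl htri p s v hph hpl
    · refine ⟨[s, v], rfl, by simp, ⟨[], by simp, List.Forall₂.nil⟩, ?_⟩
      simp [walkWeightE, hT0]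
  | succ i ih =>
    intro hi
    have hi' : i < cs.length := hi
    have htake : cs.take (i + 1) = cs.take i ++ [cs.get ⟨i, hi'⟩] :=
      (List.take_concat_get' cs i hi').symm
    refine le_antisymm (le_sInf ?_) ?_
    · rintro x ⟨p, hph, hpl, ⟨q, hq, hf⟩, rfl⟩
      rw [htake] at hf
      obtain ⟨q', u, rfl, hf', hcu⟩ := forall2_concat_split hf
      obtain ⟨p1, p2, rfl, hq'⟩ := sublist_concat_split hq
      have hh : (p1 ++ [u]).head? = some s := by
        rw [← head?_append_cons p1 u p2]; exact hph
      have hl : (u :: p2).getLast? = some v := by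
        rw [← getLast?_append_cons p1 u p2]; exact hpl
      have hTu : T u i ≤ walkWeightE dist (p1 ++ [u]) := by
        rw [ih u (le_of_lt hi')]
        exact sInf_le ⟨p1 ++ [u], hh, by simp,
          ⟨q', hq'.trans (List.sublist_append_left _ _), hf'⟩, rfl⟩
      have hduv : dist u v ≤ walkWeightE dist (u :: p2) :=
        walkWeightE_ge dist hrefl htri _ u v rfl hl
      rw [walkWeightE_append_cons, hT v i hi']
      calc (⨅ w, D w (i + 1) + dist w v) ≤ D u (i + 1) + dist u v := iInf_le _ u
        _ = (⨅ w, T w i + dist w u) + dist u v := by rw [hD u i hi', if_pos hcu]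
        _ ≤ (T u i + dist u u) + dist u v := add_le_add_left (iInf_le _ u) _
        _ = T u i + dist u v := by rw [hrefl, add_zero]
        _ ≤ _ := add_le_add hTu hduv
    · rw [hT v i hi']
      refine le_iInf fun u => ?_
      rw [hD u i hi']
      split_ifs with hcu
      · rw [ENNReal.iInf_add]
        refine le_iInf fun w => ?_
        rw [add_assoc, ih w (le_of_lt hi'), ENNReal.sInf_add]
        refine le_iInf₂ fun x hx => ?_
        obtain ⟨p, hph, hpl, ⟨q, hq, hf⟩, rfl⟩ := hx
        refine sInf_le ⟨p ++ [u, v], ?_, ?_, ?_, ?_⟩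
        · rw [List.head?_append, hph]; rfl
        · rw [List.getLast?_append]; rfl
        · rw [htake]
          exact ⟨q ++ [u], hq.append (by simp),
            List.rel_append hf (List.forall₂_cons.2 ⟨hcu, List.Forall₂.nil⟩)⟩
        · show walkWeightE dist (p ++ u :: [v]) = _
          rw [walkWeightE_append_cons, walkWeightE_concat dist p w u hpl]
          simp [walkWeightE, add_assoc]
      · simp
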